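/- arXiv:1811.10850 — 2 statements merged into one kernel-verified Lean document; each statement's English description precedes it below -/
import Mathlib

section
/- Let n ≥ 1, c > 0, ν ≥ 0, γ ∈ ℝ, ρ₀ > 0, and let Φ be a C⁴ function of (τ, z, y) ∈ ℝ × ℝ × ℝ^{n−1}. Define u(t, x₁, x') = Φ(t − x₁/c, ε x₁, √ε x'). Then the Kuznetsov operator applied to u satisfies ∂²_t u − c²Δu − ε∂_t((∇u)² + ((γ−1)/(2c²))(∂_t u)² + (ν/ρ₀)Δu) = ε[2c ∂²_{τz}Φ − ((γ+1)/(2c²))∂_τ(∂_τΦ)² − (ν/(ρ₀c²))∂³_τΦ − c²Δ_yΦ] + ε² R, where R = −c²∂²_zΦ + (2/c)∂_τ(∂_τΦ ∂_zΦ) − ∂_τ(∇_yΦ)² + (2ν/(cρ₀))∂²_τ∂_zΦ − (ν/ρ₀)∂_τΔ_yΦ + ε(−∂_τ(∂_zΦ)² − (ν/ρ₀)∂_τ∂²_zΦ). -/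
/-!
Along the paraxial substitution the chain rule turns `∂_t` into `∂_τ`, `∂_{x₁}` into
`-c⁻¹ ∂_τ + ε ∂_z` and `∇_{x'}` into `√ε ∇_y`, so `Δ_{x'} u = ε Δ_y Φ` and
`‖∇_{x'} u‖² = ε ‖∇_y Φ‖²`. The transverse terms then only enter through their values and
`τ`-derivatives, and after using `∂_τ ∂_z Φ = ∂_z ∂_τ Φ` both sides are the same polynomial in
the partial derivatives of `Φ` at `(τ, z, y)`.
-/

noncomputable section

abbrev Esp (m : ℕ) := EuclideanSpace ℝ (Fin m)

def elap {m : ℕ} (f : Esp m → ℝ) (x : Esp m) : ℝ :=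
  ∑ i, fderiv ℝ (fun y => fderiv ℝ f y (EuclideanSpace.single i 1)) x
    (EuclideanSpace.single i 1)

section DirDeriv

variable {V H : Type*} [NormedAddCommGroup V] [NormedSpace ℝ V] [NormedAddCommGroup H]
  [NormedSpace ℝ H]

def dirDeriv (G : V → H) (v : V) : V → H := fun q => fderiv ℝ G q v

theorem ContDiff.dirDeriv {G : V → H} {m n : WithTop ℕ∞} (hG : ContDiff ℝ n G)
    (hmn : m + 1 ≤ n) (v : V) : ContDiff ℝ m (dirDeriv G v) :=
  (hG.fderiv_right hmn).clm_apply contDiff_const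

theorem ContDiff.differentiable_dirDeriv {G : V → H} {n : WithTop ℕ∞} (hG : ContDiff ℝ n G)
    (hn : 2 ≤ n) (v : V) : Differentiable ℝ (_root_.dirDeriv G v) :=
  (hG.dirDeriv (m := 1) hn v).differentiable one_ne_zero

theorem dirDeriv_comm {G : V → H} (hG : ContDiff ℝ 2 G) (v w : V) :
    dirDeriv (dirDeriv G v) w = dirDeriv (dirDeriv G w) v := by
  funext q
  have hd : Differentiable ℝ (fderiv ℝ G) :=
    (hG.fderiv_right (m := 1) (by norm_num)).differentiable one_ne_zero
  have hessian : ∀ u x, dirDeriv (dirDeriv G u) x q = fderiv ℝ (fderiv ℝ G) q x u := by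
    intro u x
    change fderiv ℝ (fun r => fderiv ℝ G r u) q x = _
    rw [fderiv_clm_apply (hd q) (differentiableAt_const u)]
    simp
  rw [hessian, hessian, hG.contDiffAt.isSymmSndFDerivAt (by simp) w v]

theorem deriv_comp_of_hasDerivAt {G : V → H} (hG : Differentiable ℝ G) {ℓ : ℝ → V} {v : V}
    (hℓ : ∀ s, HasDerivAt ℓ v s) : deriv (fun s => G (ℓ s)) = fun s => dirDeriv G v (ℓ s) :=
  funext fun s => ((hG _).hasFDerivAt.comp_hasDerivAt s (hℓ s)).deriv

end DirDeriv

section Lines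

variable {E H : Type*} [NormedAddCommGroup E] [NormedSpace ℝ E] [NormedAddCommGroup H]
  [NormedSpace ℝ H] {G : ℝ × ℝ × E → H}

theorem deriv_comp_mk₁ (hG : Differentiable ℝ G) (z : ℝ) (y : E) :
    deriv (fun a => G (a, z, y)) = fun a => dirDeriv G (1, 0, 0) (a, z, y) :=
  deriv_comp_of_hasDerivAt hG fun a =>
    (hasDerivAt_id a).prodMk ((hasDerivAt_const a z).prodMk (hasDerivAt_const a y))

theorem deriv_comp_mk₂ (hG : Differentiable ℝ G) (τ : ℝ) (y : E) :
    deriv (fun b => G (τ, b, y)) = fun b => dirDeriv G (0, 1, 0) (τ, b, y) :=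
  deriv_comp_of_hasDerivAt hG fun b =>
    (hasDerivAt_const b τ).prodMk ((hasDerivAt_id b).prodMk (hasDerivAt_const b y))

theorem deriv_comp_mk₁_sub (hG : Differentiable ℝ G) (k z : ℝ) (y : E) :
    deriv (fun s => G (s - k, z, y)) = fun s => dirDeriv G (1, 0, 0) (s - k, z, y) :=
  deriv_comp_of_hasDerivAt hG fun s =>
    ((hasDerivAt_id s).sub_const k).prodMk ((hasDerivAt_const s z).prodMk (hasDerivAt_const s y))

theorem deriv_comp_paraxial (hG : Differentiable ℝ G) (t c ε : ℝ) (y : E) :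
    deriv (fun a => G (t - a / c, ε * a, y)) = fun a =>
      -(1 / c) • dirDeriv G (1, 0, 0) (t - a / c, ε * a, y)
        + ε • dirDeriv G (0, 1, 0) (t - a / c, ε * a, y) := by
  have hℓ : ∀ a, HasDerivAt (fun a => ((t - a / c, ε * a, y) : ℝ × ℝ × E)) (-(1 / c), ε, 0) a :=
    fun a => by
      simpa using (((hasDerivAt_id a).div_const c).const_sub t).prodMk
        (((hasDerivAt_id a).const_mul ε).prodMk (hasDerivAt_const a y))
  have hw : ((-(1 / c), ε, 0) : ℝ × ℝ × E) = -(1 / c) • (1, 0, 0) + ε • (0, 1, 0) := by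
    ext <;> simp
  rw [deriv_comp_of_hasDerivAt hG hℓ, hw]
  funext a
  simp only [dirDeriv, map_add, map_smul]

end Lines

section Transverse

variable {X : Type*} [NormedAddCommGroup X] [NormedSpace ℝ X]

theorem fderiv_comp_smul_apply {E F : Type*} [NormedAddCommGroup E] [NormedSpace ℝ E]
    [NormedAddCommGroup F] [NormedSpace ℝ F] (f : E → F) (r : ℝ) (x v : E) :
    fderiv ℝ (fun d => f (r • d)) x v = r • fderiv ℝ f (r • x) v := by
  rw [fderiv_comp_smul]
  rfl

theorem norm_sq_gradient_comp_smul {F : Type*} [NormedAddCommGroup F] [InnerProductSpace ℝ F]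
    [CompleteSpace F] (f : F → ℝ) (r : ℝ) (x : F) :
    ‖gradient (fun d => f (r • d)) x‖ ^ 2 = r ^ 2 * ‖gradient f (r • x)‖ ^ 2 := by
  simp only [gradient, fderiv_comp_smul, map_smul, norm_smul, Real.norm_eq_abs, mul_pow, sq_abs]

theorem elap_comp_smul {m : ℕ} (f : Esp m → ℝ) (r : ℝ) (x : Esp m) :
    elap (fun d => f (r • d)) x = r ^ 2 * elap f (r • x) := by
  rw [elap, elap, Finset.mul_sum]
  refine Finset.sum_congr rfl fun i _ => ?_
  have h : (fun y => fderiv ℝ (fun d => f (r • d)) y (EuclideanSpace.single i 1)) =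
      r • fun y => fderiv ℝ f (r • y) (EuclideanSpace.single i 1) :=
    funext fun y => fderiv_comp_smul_apply f r y _
  rw [h, fderiv_const_smul_field, Pi.smul_apply, FunLike.coe_smul, Pi.smul_apply,
    fderiv_comp_smul_apply (fun y => fderiv ℝ f y _), smul_smul, smul_eq_mul, sq]

theorem ContDiff.gradient {F : Type*} [NormedAddCommGroup F] [InnerProductSpace ℝ F]
    [CompleteSpace F] {f : X → F → ℝ} {g : X → F} {k n : WithTop ℕ∞}
    (hf : ContDiff ℝ n (Function.uncurry f)) (hg : ContDiff ℝ k g) (hkn : k + 1 ≤ n) :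
    ContDiff ℝ k fun x => gradient (f x) (g x) :=
  (InnerProductSpace.toDual ℝ F).symm.contDiff.comp (hf.fderiv hg hkn)

theorem ContDiff.elap {m : ℕ} {f : X → Esp m → ℝ} {g : X → Esp m} {k n : WithTop ℕ∞}
    (hf : ContDiff ℝ n (Function.uncurry f)) (hg : ContDiff ℝ k g) (hkn : k + 2 ≤ n) :
    ContDiff ℝ k fun x => elap (f x) (g x) := by
  refine ContDiff.sum fun i _ => ?_
  have hfi : ContDiff ℝ (k + 1)
      (Function.uncurry fun x y => fderiv ℝ (f x) y (EuclideanSpace.single i 1)) :=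
    ContDiff.fderiv_apply (f := fun p : X × Esp m => f p.1)
      (hf.comp (contDiff_fst.fst.prodMk contDiff_snd)) contDiff_snd contDiff_const
      (by rwa [add_assoc, one_add_one_eq_two])
  exact hfi.fderiv_apply hg contDiff_const le_rfl

end Transverse

theorem stmt_15_general (m : ℕ) (c ν γ ρ₀ ε : ℝ) (hc : 0 < c)
    (hε : 0 < ε)
    (Φ : ℝ → ℝ → Esp m → ℝ)
    (hΦ : ContDiff ℝ 4 (fun q : ℝ × ℝ × Esp m => Φ q.1 q.2.1 q.2.2))
    (u : ℝ → ℝ → Esp m → ℝ)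
    (hu : ∀ (t x₁ : ℝ) (x' : Esp m),
      u t x₁ x' = Φ (t - x₁ / c) (ε * x₁) (Real.sqrt ε • x')) :
    ∀ (t x₁ : ℝ) (x' : Esp m), ∀ τ z : ℝ, ∀ y : Esp m,
      τ = t - x₁ / c → z = ε * x₁ → y = Real.sqrt ε • x' →
      -- Kuznetsov operator applied to `u`, at `(t, x₁, x')`:
      deriv (fun a => deriv (fun b => u b x₁ x') a) t
        - c^2 * (deriv (fun a => deriv (fun b => u t b x') a) x₁
                  + elap (fun a => u t x₁ a) x')
        - ε * deriv (fun s =>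
            ((deriv (fun a => u s a x') x₁)^2
              + ‖gradient (fun a => u s x₁ a) x'‖^2)
            + (γ - 1) / (2 * c^2) * (deriv (fun b => u b x₁ x') s)^2
            + ν / ρ₀ * (deriv (fun a => deriv (fun b => u s b x') a) x₁
                          + elap (fun a => u s x₁ a) x')) t
      = ε * (2 * c * deriv (fun a => deriv (fun b => Φ b a y) τ) z
              - (γ + 1) / (2 * c^2) * deriv (fun a => (deriv (fun b => Φ b z y) a)^2) τ
              - ν / (ρ₀ * c^2)
                  * deriv (fun a => deriv (fun b => deriv (fun d => Φ d z y) b) a) τ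
              - c^2 * elap (fun d => Φ τ z d) y)
        + ε^2 * (-(c^2) * deriv (fun a => deriv (fun b => Φ τ b y) a) z
              + (2 / c) * deriv (fun a =>
                  deriv (fun b => Φ b z y) a * deriv (fun b => Φ a b y) z) τ
              - deriv (fun a => ‖gradient (fun d => Φ a z d) y‖^2) τ
              + 2 * ν / (c * ρ₀)
                  * deriv (fun a => deriv (fun b => deriv (fun d => Φ b d y) z) a) τ
              - ν / ρ₀ * deriv (fun a => elap (fun d => Φ a z d) y) τ
              + ε * (-(deriv (fun a => (deriv (fun b => Φ a b y) z)^2) τ)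
                  - ν / ρ₀
                      * deriv (fun a => deriv (fun b => deriv (fun d => Φ a d y) b) z) τ)) := by
  intro t x₁ x' τ z y hτ hz hy
  subst hτ hz hy
  simp only [hu, elap_comp_smul, norm_sq_gradient_comp_smul, Real.sq_sqrt hε.le]
  have hslice : ContDiff ℝ 4 (Function.uncurry fun a => Φ a (ε * x₁)) :=
    hΦ.comp (f := fun p : ℝ × Esp m => (p.1, ε * x₁, p.2)) (by fun_prop)
  -- only values and `τ`-derivatives of the transverse terms occur, so they become opaque
  obtain ⟨N, hN, hNeq⟩ : ∃ N : ℝ → ℝ, Differentiable ℝ N ∧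
      ∀ a, ‖gradient (Φ a (ε * x₁)) (√ε • x')‖ ^ 2 = N a :=
    ⟨_, ((hslice.gradient contDiff_const (k := 1) (by norm_num)).norm_sq (𝕜 := ℝ)).differentiable
      one_ne_zero, fun _ => rfl⟩
  obtain ⟨L, hL, hLeq⟩ : ∃ L : ℝ → ℝ, Differentiable ℝ L ∧
      ∀ a, elap (Φ a (ε * x₁)) (√ε • x') = L a :=
    ⟨_, (hslice.elap contDiff_const (k := 1) (by norm_num)).differentiable one_ne_zero,
      fun _ => rfl⟩
  simp only [hNeq, hLeq]
  obtain ⟨F, hF, rfl⟩ : ∃ F : ℝ × ℝ × Esp m → ℝ, ContDiff ℝ 4 F ∧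
      Φ = fun a b y => F (a, b, y) := ⟨_, hΦ, rfl⟩
  have hF₁ : Differentiable ℝ F := hF.differentiable (by norm_num)
  have hF₂ : ∀ v, Differentiable ℝ (dirDeriv F v) := hF.differentiable_dirDeriv (by norm_num)
  have hF₃ : ∀ v w, Differentiable ℝ (dirDeriv (dirDeriv F v) w) := fun v =>
    (hF.dirDeriv (m := 3) (by norm_num) v).differentiable_dirDeriv (by norm_num)
  simp (disch := fun_prop) only [deriv_comp_mk₁, deriv_comp_mk₂, deriv_comp_mk₁_sub,
    deriv_comp_paraxial, deriv_fun_add, deriv_const_mul_field, deriv_fun_pow, deriv_fun_mul,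
    deriv_comp_sub_const, smul_eq_mul,
    dirDeriv_comm (hF.of_le (by norm_num)) (0, 1, 0) (1, 0, 0)]
  -- keep `field_simp` away from the base point
  generalize (t - x₁ / c, ε * x₁, √ε • x') = p
  generalize t - x₁ / c = τ
  have := hc.ne'
  ring_nf
  field_simp
  ring

/-- The Kuznetsov operator applied to the KZK paraxial profile
`u(t,x₁,x') = Φ(t − x₁/c, εx₁, √ε x')` equals
`ε[2c∂²_{τz}Φ − ((γ+1)/(2c²))∂_τ(∂_τΦ)² − (ν/(ρ₀c²))∂³_τΦ − c²Δ_yΦ] + ε²R`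
with the explicit remainder `R = R^{Kuz-KZK}`. -/
theorem stmt_15 (m : ℕ) (c ν γ ρ₀ ε : ℝ) (hc : 0 < c) (hρ₀ : 0 < ρ₀) (hν : 0 ≤ ν)
    (hε : 0 < ε)
    (Φ : ℝ → ℝ → Esp m → ℝ)
    (hΦ : ContDiff ℝ 4 (fun q : ℝ × ℝ × Esp m => Φ q.1 q.2.1 q.2.2))
    (u : ℝ → ℝ → Esp m → ℝ)
    (hu : ∀ (t x₁ : ℝ) (x' : Esp m),
      u t x₁ x' = Φ (t - x₁ / c) (ε * x₁) (Real.sqrt ε • x')) :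
    ∀ (t x₁ : ℝ) (x' : Esp m), ∀ τ z : ℝ, ∀ y : Esp m,
      τ = t - x₁ / c → z = ε * x₁ → y = Real.sqrt ε • x' →
      -- Kuznetsov operator applied to `u`, at `(t, x₁, x')`:
      deriv (fun a => deriv (fun b => u b x₁ x') a) t
        - c^2 * (deriv (fun a => deriv (fun b => u t b x') a) x₁
                  + elap (fun a => u t x₁ a) x')
        - ε * deriv (fun s =>
            ((deriv (fun a => u s a x') x₁)^2
              + ‖gradient (fun a => u s x₁ a) x'‖^2)
            + (γ - 1) / (2 * c^2) * (deriv (fun b => u b x₁ x') s)^2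
            + ν / ρ₀ * (deriv (fun a => deriv (fun b => u s b x') a) x₁
                          + elap (fun a => u s x₁ a) x')) t
      = ε * (2 * c * deriv (fun a => deriv (fun b => Φ b a y) τ) z
              - (γ + 1) / (2 * c^2) * deriv (fun a => (deriv (fun b => Φ b z y) a)^2) τ
              - ν / (ρ₀ * c^2)
                  * deriv (fun a => deriv (fun b => deriv (fun d => Φ d z y) b) a) τ
              - c^2 * elap (fun d => Φ τ z d) y)
        + ε^2 * (-(c^2) * deriv (fun a => deriv (fun b => Φ τ b y) a) z
              + (2 / c) * deriv (fun a =>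
                  deriv (fun b => Φ b z y) a * deriv (fun b => Φ a b y) z) τ
              - deriv (fun a => ‖gradient (fun d => Φ a z d) y‖^2) τ
              + 2 * ν / (c * ρ₀)
                  * deriv (fun a => deriv (fun b => deriv (fun d => Φ b d y) z) a) τ
              - ν / ρ₀ * deriv (fun a => elap (fun d => Φ a z d) y) τ
              + ε * (-(deriv (fun a => (deriv (fun b => Φ a b y) z)^2) τ)
                  - ν / ρ₀
                      * deriv (fun a => deriv (fun b => deriv (fun d => Φ a d y) b) z) τ)) :=
  stmt_15_general m c ν γ ρ₀ ε hc hε Φ hΦ u hu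
end
end

section
/- Let n ∈ {2,3} and let U = (ρ, ρv) with ρ > 0, v ∈ ℝⁿ. Let η(U) = H(ρ) + |m|²/(2ρ) with m = ρv, and let G₁(U) = (ρv₁, ρv₁v + p(ρ)e₁) be the first flux of the isentropic Euler system, with H''(ρ) = p'(ρ)/ρ. Then the boundary quadratic form satisfies the identity U^T η''(U) DG₁(U) U = ρ p'(ρ) v₁. -/
set_option maxHeartbeats 1000000


open Matrix

/-- Boundary quadratic form identity for the isentropic Euler system on the half
space: with `U = (ρ, ρv)`, `η(U) = H(ρ) + |m|²/(2ρ)`, `H''(ρ) = p'(ρ)/ρ`, the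
Hessian `η''(U)` and the flux Jacobian `DG₁(U)` as in the paper, one has
`Uᵀ η''(U) DG₁(U) U = ρ p'(ρ) v₁`. -/
theorem stmt_19 (n : ℕ) (hn : n = 2 ∨ n = 3) (ρ : ℝ) (hρ : 0 < ρ)
    (v : Fin n → ℝ) (p : ℝ → ℝ) (hp : DifferentiableAt ℝ p ρ)
    (Hpp : ℝ) (hH : Hpp = deriv p ρ / ρ)
    (U : Fin (n + 1) → ℝ) (hU : U = Fin.cons ρ (fun i => ρ * v i))
    (ηpp DG₁ : Matrix (Fin (n + 1)) (Fin (n + 1)) ℝ)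
    (hηpp : ∀ i j, ηpp i j =
      if hi : i = 0 then
        (if hj : j = 0 then Hpp + (∑ k, (v k)^2) / ρ else -(v (j.pred hj)) / ρ)
      else
        (if hj : j = 0 then -(v (i.pred hi)) / ρ
         else if i.pred hi = j.pred hj then 1 / ρ else 0))
    (hDG₁ : ∀ i j, DG₁ i j =
      if hi : i = 0 then (if (j : ℕ) = 1 then 1 else 0)
      else if hj : j = 0 then
        (if i.pred hi = ⟨0, by omega⟩ then -(v ⟨0, by omega⟩)^2 + deriv p ρ
         else -(v ⟨0, by omega⟩) * v (i.pred hi))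
      else
        (if i.pred hi = ⟨0, by omega⟩ then
            (if j.pred hj = ⟨0, by omega⟩ then 2 * v ⟨0, by omega⟩ else 0)
         else
            (if j.pred hj = ⟨0, by omega⟩ then v (i.pred hi)
             else if j.pred hj = i.pred hi then v ⟨0, by omega⟩ else 0))) :
    U ⬝ᵥ ((ηpp * DG₁) *ᵥ U) = ρ * deriv p ρ * v ⟨0, by omega⟩ := by
  subst hU hH
  have hρ' := hρ.ne'
  rcases hn with h | h <;> subst h <;>
  · simp only [dotProduct, Matrix.mulVec, Matrix.mul_apply, Fin.sum_univ_succ,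
      Fin.sum_univ_zero, hηpp, hDG₁, Fin.cons_zero, Fin.cons_succ, Fin.succ_ne_zero,
      Fin.pred_succ]
    norm_num [Fin.ext_iff]
    field_simp
    ring
end
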